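/- arXiv:2001.05635 — 2 statements merged into one kernel-verified Lean document; each statement's English description precedes it below -/
import Mathlib

section
/- Let s, r be positive integers, x = s·log q / log(1 + 1/r), and a_k = ⌊1/(q^{k/x} − 1)⌋ for k ≥ 1. Let h be an x-semi-superior highly composite polynomial, and let N = deg h − u with 1 ≤ u ≤ s − 1. Then T(N) satisfies (u/s)·log(1 + 1/r) ≤ log τ(h) − log T(N) ≤ log(1 + 1/a_u), where T(N) = max{ τ(f) : f ∈ 𝔽_q[t] monic of degree N }. (Moreover T(deg h) = τ(h).) -/
open Polynomial

noncomputable def tau {Fq : Type} [Field Fq] (f : Fq[X]) : ℕ :=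
  {d : Fq[X] | d.Monic ∧ d ∣ f}.ncard

/-- `h` is an `x`-semi-superior highly composite polynomial. -/
noncomputable def IsSSHC {Fq : Type} [Field Fq] [Fintype Fq] (x : ℝ) (h : Fq[X]) : Prop :=
  h.Monic ∧ ∀ f : Fq[X], f.Monic →
    (tau f : ℝ) * (Fintype.card Fq : ℝ) ^ (-(f.natDegree : ℝ) / x) ≤
    (tau h : ℝ) * (Fintype.card Fq : ℝ) ^ (-(h.natDegree : ℝ) / x)

/-- `T(N)`: the maximum of `tau` over monic polynomials of degree `N`. -/
noncomputable def Tmax (Fq : Type) [Field Fq] (N : ℕ) : ℕ :=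
  sSup {t : ℕ | ∃ f : Fq[X], f.Monic ∧ f.natDegree = N ∧ tau f = t}

/-!
Put `θ = q ^ (u / x) = (1 + 1 / r) ^ (u / s)`, so that `1 < θ < 1 + 1 / r`. Comparing `h` with the
maximiser of `τ` in degree `N = deg h - u` through the SSHC inequality gives `T(N) θ ≤ τ(h)`.

For the other bound take a monic irreducible `P` of degree `u` and write `h = P ^ e * g` with
`P ∤ g`, so `τ(h) = (e + 1) τ(g)`. The SSHC inequality against `P ^ (e + 1) * g` gives
`e + 2 ≤ (e + 1) θ`, i.e. `1 / (θ - 1) ≤ e + 1`; equality would mean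
`(e + 2) ^ s r ^ u = (e + 1) ^ s (r + 1) ^ u`, so `(e + 2) ^ s`, being coprime to `(e + 1) ^ s`,
would divide `(r + 1) ^ u < (r + 1) ^ s ≤ (e + 2) ^ s` (as `r < 1 / (θ - 1)`). Hence `a_u ≤ e`,
and the competitor `P ^ (e - 1) * g` of degree `N` gives
`τ(h) = (1 + 1 / e) e τ(g) ≤ (1 + 1 / a_u) T(N)`.
-/

theorem one_add_one_div_pow_ne {a r u s : ℕ} (hr : 0 < r) (hra : r ≤ a) (hus : u < s) :
    (1 + 1 / (a : ℝ)) ^ s ≠ (1 + 1 / (r : ℝ)) ^ u := by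
  intro h
  have hcross : (a + 1) ^ s * r ^ u = (r + 1) ^ u * a ^ s := by
    have ha : (0 : ℝ) < a := by exact_mod_cast hr.trans_le hra
    have hr' : (0 : ℝ) < r := by exact_mod_cast hr
    rw [one_add_div ha.ne', one_add_div hr'.ne', div_pow, div_pow,
      div_eq_div_iff (by positivity) (by positivity)] at h
    exact_mod_cast h
  have hcop : Nat.Coprime ((a + 1) ^ s) (a ^ s) :=
    .pow s s (Nat.coprime_self_add_left.mpr (Nat.coprime_one_left a))
  have hdvd : (a + 1) ^ s ∣ (r + 1) ^ u := hcop.dvd_of_dvd_mul_right ⟨r ^ u, by rw [hcross]⟩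
  have := Nat.le_of_dvd (by positivity) hdvd
  have := Nat.pow_lt_pow_right (by omega : 1 < r + 1) hus
  have := Nat.pow_le_pow_left (by omega : r + 1 ≤ a + 1) s
  omega

theorem le_floor_one_div_rpow_sub_one {r u s : ℕ} (hr : 0 < r) (hu : 0 < u) (hus : u < s) :
    r ≤ ⌊1 / ((1 + 1 / (r : ℝ)) ^ ((u : ℝ) / s) - 1)⌋₊ := by
  set θ := (1 + 1 / (r : ℝ)) ^ ((u : ℝ) / s)
  have hr' : (0 : ℝ) < r := by exact_mod_cast hr
  have hbase : 1 < 1 + 1 / (r : ℝ) := by simp [hr']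
  have hs : (0 : ℝ) < s := by exact_mod_cast hu.trans hus
  have hexp : (u : ℝ) / s < 1 := (div_lt_one hs).mpr (by exact_mod_cast hus)
  have hθ₁ : 1 < θ := Real.one_lt_rpow hbase (by positivity)
  have hθr : θ < 1 + 1 / r := by
    simpa only [Real.rpow_one] using Real.rpow_lt_rpow_of_exponent_lt hbase hexp
  refine Nat.le_floor ((lt_div_iff₀ (by linarith)).mpr ?_).le
  calc (r : ℝ) * (θ - 1) < r * (1 / r) := by gcongr; linarith
    _ = 1 := by field_simp

theorem floor_one_div_rpow_sub_one_le {r u s e : ℕ} (hr : 0 < r) (hu : 0 < u) (hus : u < s)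
    (he : (e + 2 : ℝ) ≤ (e + 1) * (1 + 1 / (r : ℝ)) ^ ((u : ℝ) / s)) :
    ⌊1 / ((1 + 1 / (r : ℝ)) ^ ((u : ℝ) / s) - 1)⌋₊ ≤ e := by
  set θ := (1 + 1 / (r : ℝ)) ^ ((u : ℝ) / s)
  have hθ₁ : 0 < θ - 1 := by nlinarith
  have hc : 1 / (θ - 1) ≤ e + 1 := (div_le_iff₀ hθ₁).mpr (by linarith)
  by_contra! hlt
  have hfloor : ⌊1 / (θ - 1)⌋₊ = e + 1 :=
    le_antisymm (Nat.le_of_lt_succ ((Nat.floor_lt (by positivity)).mpr (by push_cast; linarith)))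
      hlt
  have hθ : θ = 1 + 1 / ((e + 1 : ℕ) : ℝ) := by
    have hfl := Nat.floor_le (one_div_pos.mpr hθ₁).le
    rw [hfloor] at hfl
    have hceq : 1 / (θ - 1) = ((e + 1 : ℕ) : ℝ) := le_antisymm (by push_cast; linarith) hfl
    rw [← hceq]
    field_simp
    ring
  have hpow : θ ^ s = (1 + 1 / (r : ℝ)) ^ u := by
    rw [← Real.rpow_natCast, ← Real.rpow_mul (by positivity),
      div_mul_cancel₀ _ (by exact_mod_cast (hu.trans hus).ne'), Real.rpow_natCast]
  exact one_add_one_div_pow_ne hr (hfloor ▸ le_floor_one_div_rpow_sub_one hr hu hus) hus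
    (hθ ▸ hpow)

section Tau

variable {Fq : Type} [Field Fq]

theorem Polynomial.finite_setOf_natDegree_le [Finite Fq] (n : ℕ) :
    {p : Fq[X] | p.natDegree ≤ n}.Finite := by
  have : Finite (degreeLT Fq (n + 1)) := .of_equiv _ (degreeLTEquiv Fq (n + 1)).toEquiv.symm
  refine (degreeLT Fq (n + 1) : Set Fq[X]).toFinite.subset fun p hp => ?_
  rw [SetLike.mem_coe, mem_degreeLT]
  exact (degree_le_natDegree.trans (WithBot.coe_le_coe.mpr hp)).trans_lt
    (WithBot.coe_lt_coe.mpr n.lt_succ_self)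

theorem tau_pos [Finite Fq] {f : Fq[X]} (hf : f ≠ 0) : 0 < tau f :=
  (Set.ncard_pos ((finite_setOf_natDegree_le f.natDegree).subset fun _ hd =>
    natDegree_le_of_dvd hd.2 hf)).mpr ⟨1, monic_one, one_dvd f⟩

theorem tau_mul_of_isCoprime {a b : Fq[X]} (hab : IsCoprime a b) :
    tau (a * b) = tau a * tau b := by
  classical
  have hmk : {d : Fq[X] | d.Monic ∧ d ∣ a * b} =
      (fun d : Fq[X] × Fq[X] => d.1 * d.2) ''
        ({d | d.Monic ∧ d ∣ a} ×ˢ {d | d.Monic ∧ d ∣ b}) := by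
    ext d
    constructor
    · rintro ⟨hdm, hd⟩
      obtain ⟨d₁, d₂, h₁, h₂, rfl⟩ := exists_dvd_and_dvd_of_dvd_mul hd
      have hd₁ : d₁ ≠ 0 := left_ne_zero_of_mul hdm.ne_zero
      have hd₂ : d₂ ≠ 0 := right_ne_zero_of_mul hdm.ne_zero
      refine ⟨(normalize d₁, normalize d₂), ⟨⟨monic_normalize hd₁, normalize_dvd_iff.mpr h₁⟩,
        ⟨monic_normalize hd₂, normalize_dvd_iff.mpr h₂⟩⟩, ?_⟩
      exact (normalize_mul d₁ d₂).symm.trans hdm.normalize_eq_self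
    · rintro ⟨⟨d₁, d₂⟩, ⟨⟨hm₁, h₁⟩, ⟨hm₂, h₂⟩⟩, rfl⟩
      exact ⟨hm₁.mul hm₂, mul_dvd_mul h₁ h₂⟩
  have hinj : Set.InjOn (fun d : Fq[X] × Fq[X] => d.1 * d.2)
      ({d | d.Monic ∧ d ∣ a} ×ˢ {d | d.Monic ∧ d ∣ b}) := by
    rintro ⟨d₁, d₂⟩ ⟨⟨hm₁, h₁⟩, -, h₂⟩ ⟨e₁, e₂⟩ ⟨⟨hn₁, k₁⟩, -, k₂⟩ (he : d₁ * d₂ = e₁ * e₂)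
    have hde : d₁ ∣ e₁ :=
      ((hab.of_isCoprime_of_dvd_left h₁).of_isCoprime_of_dvd_right k₂).dvd_of_dvd_mul_right
        (he ▸ dvd_mul_right d₁ d₂)
    have hed : e₁ ∣ d₁ :=
      ((hab.of_isCoprime_of_dvd_left k₁).of_isCoprime_of_dvd_right h₂).dvd_of_dvd_mul_right
        (he ▸ dvd_mul_right e₁ e₂)
    obtain rfl := eq_of_monic_of_associated hm₁ hn₁ (associated_of_dvd_dvd hde hed)
    rw [mul_left_cancel₀ hm₁.ne_zero he]
  rw [tau, hmk, hinj.ncard_image, Set.ncard_prod, tau, tau]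

theorem tau_pow_of_irreducible {P : Fq[X]} (hPm : P.Monic) (hP : Irreducible P) (k : ℕ) :
    tau (P ^ k) = k + 1 := by
  have hdiv : {d : Fq[X] | d.Monic ∧ d ∣ P ^ k} = (P ^ ·) '' Set.Iic k := by
    ext d
    rw [Set.mem_ofPred_eq, dvd_prime_pow hP.prime]
    constructor
    · rintro ⟨hdm, i, hi, hd⟩
      exact ⟨i, hi, (eq_of_monic_of_associated hdm (hPm.pow i) hd).symm⟩
    · rintro ⟨i, hi, rfl⟩
      exact ⟨hPm.pow i, i, hi, Associated.refl _⟩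
  rw [tau, hdiv,
    Set.ncard_image_of_injective _ (pow_injective_of_not_isUnit hP.not_isUnit hP.ne_zero),
    ← Finset.coe_Iic, Set.ncard_coe_finset, Nat.card_Iic]

theorem tau_pow_mul_of_not_dvd {P g : Fq[X]} (hPm : P.Monic) (hP : Irreducible P) (hPg : ¬P ∣ g)
    (k : ℕ) : tau (P ^ k * g) = (k + 1) * tau g := by
  rw [tau_mul_of_isCoprime (hP.coprime_iff_not_dvd.mpr hPg).pow_left,
    tau_pow_of_irreducible hPm hP]

theorem exists_monic_irreducible_natDegree (Fq : Type) [Field Fq] [Finite Fq] {n : ℕ}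
    (hn : n ≠ 0) :
    ∃ P : Fq[X], P.Monic ∧ Irreducible P ∧ P.natDegree = n := by
  obtain ⟨p, _⟩ := CharP.exists Fq
  have : Fact p.Prime := ⟨CharP.char_is_prime Fq p⟩
  have : NeZero n := ⟨hn⟩
  let pb := Field.powerBasisOfFiniteOfSeparable Fq (FiniteField.Extension Fq p n)
  refine ⟨minpoly Fq pb.gen, minpoly.monic pb.isIntegral_gen,
    minpoly.irreducible pb.isIntegral_gen, ?_⟩
  rw [pb.natDegree_minpoly, ← pb.finrank, FiniteField.finrank_extension]

end Tau

section Tmax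

variable {Fq : Type} [Field Fq] [Finite Fq]

theorem bddAbove_tau_of_natDegree_eq (N : ℕ) :
    BddAbove {t : ℕ | ∃ f : Fq[X], f.Monic ∧ f.natDegree = N ∧ tau f = t} :=
  ((finite_setOf_natDegree_le N).image tau).bddAbove.mono <| by
    rintro _ ⟨f, -, hf, rfl⟩
    exact ⟨f, hf.le, rfl⟩

theorem tau_le_Tmax {f : Fq[X]} (hf : f.Monic) : tau f ≤ Tmax Fq f.natDegree :=
  le_csSup (bddAbove_tau_of_natDegree_eq _) ⟨f, hf, rfl, rfl⟩

theorem exists_monic_tau_eq_Tmax (N : ℕ) :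
    ∃ f : Fq[X], f.Monic ∧ f.natDegree = N ∧ tau f = Tmax Fq N := by
  refine Nat.sSup_mem ?_ (bddAbove_tau_of_natDegree_eq N)
  exact ⟨_, X ^ N, monic_X_pow N, natDegree_X_pow N, rfl⟩

theorem Tmax_pos (N : ℕ) : 0 < Tmax Fq N := by
  obtain ⟨f, hf, -, hfT⟩ := exists_monic_tau_eq_Tmax (Fq := Fq) N
  exact hfT ▸ tau_pos hf.ne_zero

theorem tau_le_Tmax_mul_one_add_one_div {h P g : Fq[X]} (hPm : P.Monic) (hP : Irreducible P)
    (hPg : ¬P ∣ g) {e a N : ℕ} (hh : h.Monic) (hdec : h = P ^ e * g)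
    (hN : N + P.natDegree = h.natDegree) (ha : 1 ≤ a) (hae : a ≤ e) :
    (tau h : ℝ) ≤ Tmax Fq N * (1 + 1 / (a : ℝ)) := by
  have hgm : g.Monic := (hPm.pow e).of_mul_monic_left (hdec ▸ hh)
  obtain ⟨k, rfl⟩ : ∃ k, e = k + 1 := ⟨e - 1, by omega⟩
  have hdeg : (P ^ k * g).natDegree = N := by
    rw [hdec, (hPm.pow _).natDegree_mul hgm, natDegree_pow, add_one_mul] at hN
    rw [(hPm.pow _).natDegree_mul hgm, natDegree_pow]
    linarith
  have hT : ((k + 1 : ℕ) : ℝ) * tau g ≤ Tmax Fq N := by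
    exact_mod_cast tau_pow_mul_of_not_dvd hPm hP hPg k ▸ hdeg ▸ tau_le_Tmax ((hPm.pow k).mul hgm)
  have ha' : (1 : ℝ) + 1 / (k + 1 : ℕ) ≤ 1 + 1 / a := by gcongr
  calc (tau h : ℝ) = ((k + 1 : ℕ) : ℝ) * tau g * (1 + 1 / (k + 1 : ℕ)) := by
        rw [hdec, tau_pow_mul_of_not_dvd hPm hP hPg]
        push_cast
        field_simp
    _ ≤ Tmax Fq N * (1 + 1 / a) := by gcongr

end Tmax

section SSHC

variable {Fq : Type} [Field Fq] [Fintype Fq] {x : ℝ} {h : Fq[X]}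

theorem IsSSHC.tau_le (hh : IsSSHC x h) {f : Fq[X]} (hf : f.Monic) :
    (tau f : ℝ) ≤ tau h * (Fintype.card Fq : ℝ) ^ (((f.natDegree : ℝ) - h.natDegree) / x) := by
  set q : ℝ := (Fintype.card Fq : ℝ)
  have hq : 0 < q := Nat.cast_pos.mpr Fintype.card_pos
  calc (tau f : ℝ) = tau f * q ^ (-(f.natDegree : ℝ) / x + f.natDegree / x) := by
        rw [neg_div, neg_add_cancel, Real.rpow_zero, mul_one]
    _ = tau f * q ^ (-(f.natDegree : ℝ) / x) * q ^ ((f.natDegree : ℝ) / x) := by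
        rw [Real.rpow_add hq, mul_assoc]
    _ ≤ tau h * q ^ (-(h.natDegree : ℝ) / x) * q ^ ((f.natDegree : ℝ) / x) := by
        exact mul_le_mul_of_nonneg_right (hh.2 f hf) (by positivity)
    _ = tau h * q ^ (((f.natDegree : ℝ) - h.natDegree) / x) := by
        rw [mul_assoc, ← Real.rpow_add hq]
        ring_nf

theorem IsSSHC.Tmax_natDegree (hh : IsSSHC x h) : Tmax Fq h.natDegree = tau h := by
  obtain ⟨f, hfm, hfN, hfT⟩ := exists_monic_tau_eq_Tmax (Fq := Fq) h.natDegree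
  refine le_antisymm ?_ (tau_le_Tmax hh.1)
  have := hh.tau_le hfm
  rw [hfN, sub_self, zero_div, Real.rpow_zero, mul_one] at this
  exact hfT ▸ (by exact_mod_cast this)

theorem IsSSHC.Tmax_mul_rpow_le (hh : IsSSHC x h) {N u : ℕ} (hN : N + u = h.natDegree) :
    (Tmax Fq N : ℝ) * (Fintype.card Fq : ℝ) ^ ((u : ℝ) / x) ≤ tau h := by
  have hq : (0 : ℝ) < Fintype.card Fq := Nat.cast_pos.mpr Fintype.card_pos
  obtain ⟨f, hfm, hfN, hfT⟩ := exists_monic_tau_eq_Tmax (Fq := Fq) N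
  have hexp : ((f.natDegree : ℝ) - h.natDegree) / x + u / x = 0 := by
    rw [← hN, hfN]
    push_cast
    ring
  calc (Tmax Fq N : ℝ) * (Fintype.card Fq : ℝ) ^ ((u : ℝ) / x)
      ≤ tau h * (Fintype.card Fq : ℝ) ^ (((f.natDegree : ℝ) - h.natDegree) / x) *
          (Fintype.card Fq : ℝ) ^ ((u : ℝ) / x) := by
        rw [← hfT]
        gcongr
        exact hh.tau_le hfm
    _ = tau h := by rw [mul_assoc, ← Real.rpow_add hq, hexp, Real.rpow_zero, mul_one]

theorem IsSSHC.add_two_le_mul_rpow (hh : IsSSHC x h) {P g : Fq[X]} (hPm : P.Monic)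
    (hP : Irreducible P) (hPg : ¬P ∣ g) {e : ℕ} (hdec : h = P ^ e * g) :
    (e + 2 : ℝ) ≤ (e + 1) * (Fintype.card Fq : ℝ) ^ ((P.natDegree : ℝ) / x) := by
  have hgm : g.Monic := (hPm.pow e).of_mul_monic_left (hdec ▸ hh.1)
  have hle := hh.tau_le ((hPm.pow (e + 1)).mul hgm)
  rw [hdec, tau_pow_mul_of_not_dvd hPm hP hPg, tau_pow_mul_of_not_dvd hPm hP hPg,
    (hPm.pow _).natDegree_mul hgm, (hPm.pow _).natDegree_mul hgm, natDegree_pow,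
    natDegree_pow] at hle
  have hg : (0 : ℝ) < tau g := by exact_mod_cast tau_pos hgm.ne_zero
  have hexp :
      (((e + 1 : ℕ) : ℝ) * P.natDegree + g.natDegree - (e * P.natDegree + g.natDegree)) / x =
        P.natDegree / x := by
    push_cast
    ring
  push_cast at hle hexp
  rw [hexp] at hle
  refine le_of_mul_le_mul_right ?_ hg
  linarith

end SSHC

theorem log_Tmax_bounds_general {Fq : Type} [Field Fq] [Fintype Fq]
    (s r : ℕ) (hr : 0 < r) (x : ℝ)
    (hx : x = (s : ℝ) * Real.log (Fintype.card Fq) / Real.log (1 + 1 / (r : ℝ)))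
    (h : Fq[X]) (hh : IsSSHC x h)
    (u N : ℕ) (hu₁ : 1 ≤ u) (hu₂ : u ≤ s - 1) (hN : N + u = h.natDegree) :
    ((u : ℝ) / s) * Real.log (1 + 1 / (r : ℝ)) ≤
        Real.log (tau h : ℝ) - Real.log (Tmax Fq N : ℝ) ∧
      Real.log (tau h : ℝ) - Real.log (Tmax Fq N : ℝ) ≤
        Real.log (1 + 1 / ((⌊1 / ((Fintype.card Fq : ℝ) ^ ((u : ℝ) / x) - 1)⌋₊ : ℕ) : ℝ)) ∧
      Tmax Fq h.natDegree = tau h := by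
  have hus : u < s := by omega
  have hθ : (Fintype.card Fq : ℝ) ^ ((u : ℝ) / x) = (1 + 1 / (r : ℝ)) ^ ((u : ℝ) / s) := by
    have hq : (1 : ℝ) < Fintype.card Fq := by exact_mod_cast Fintype.one_lt_card
    have hL : 0 < Real.log (1 + 1 / (r : ℝ)) := Real.log_pos (by simp [hr])
    rw [Real.rpow_def_of_pos (by linarith), Real.rpow_def_of_pos (by positivity), hx]
    field_simp [(Real.log_pos hq).ne', (Nat.cast_ne_zero.mpr (by omega : s ≠ 0))]
  obtain ⟨P, hPm, hP, hPu⟩ := exists_monic_irreducible_natDegree Fq (n := u) (by omega)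
  obtain ⟨e, g, hPg, hdec⟩ := WfDvdMonoid.max_power_factor hh.1.ne_zero hP
  have hae := floor_one_div_rpow_sub_one_le hr hu₁ hus
    (hθ ▸ hPu ▸ hh.add_two_le_mul_rpow hPm hP hPg hdec)
  have ha := hr.trans_le (le_floor_one_div_rpow_sub_one hr hu₁ hus)
  have hT : (0 : ℝ) < Tmax Fq N := Nat.cast_pos.mpr (Tmax_pos N)
  have hτ : (0 : ℝ) < tau h := Nat.cast_pos.mpr (tau_pos hh.1.ne_zero)
  rw [← Real.log_div hτ.ne' hT.ne', hθ]
  refine ⟨?_, ?_, hh.Tmax_natDegree⟩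
  · rw [← Real.log_rpow (by positivity)]
    refine Real.log_le_log (by positivity) ((le_div_iff₀ hT).mpr ?_)
    rw [mul_comm, ← hθ]
    exact hh.Tmax_mul_rpow_le hN
  · refine Real.log_le_log (div_pos hτ hT) ((div_le_iff₀ hT).mpr ?_)
    rw [mul_comm]
    exact tau_le_Tmax_mul_one_add_one_div hPm hP hPg hh.1 hdec (hPu ▸ hN) ha hae

/-- Bounds on `log τ(h) - log T(N)` for `N = deg h - u`, `1 ≤ u ≤ s - 1`, where `h` is an
`x`-SSHC polynomial for `x = s log q / log(1 + 1/r)`; moreover `T(deg h) = τ(h)`. -/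
theorem log_Tmax_bounds {Fq : Type} [Field Fq] [Fintype Fq]
    (s r : ℕ) (hs : 0 < s) (hr : 0 < r) (x : ℝ)
    (hx : x = (s : ℝ) * Real.log (Fintype.card Fq) / Real.log (1 + 1 / (r : ℝ)))
    (h : Fq[X]) (hh : IsSSHC x h)
    (u N : ℕ) (hu₁ : 1 ≤ u) (hu₂ : u ≤ s - 1) (hN : N + u = h.natDegree) :
    ((u : ℝ) / s) * Real.log (1 + 1 / (r : ℝ)) ≤
        Real.log (tau h : ℝ) - Real.log (Tmax Fq N : ℝ) ∧
      Real.log (tau h : ℝ) - Real.log (Tmax Fq N : ℝ) ≤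
        Real.log (1 + 1 / ((⌊1 / ((Fintype.card Fq : ℝ) ^ ((u : ℝ) / x) - 1)⌋₊ : ℕ) : ℝ)) ∧
      Tmax Fq h.natDegree = tau h :=
  log_Tmax_bounds_general s r hr x hx h hh u N hu₁ hu₂ hN
end

section
/- For every positive integer N there exist positive integers s, r with x = s·log q / log(1 + 1/r), an x-semi-superior highly composite polynomial h ∈ 𝔽_q[t], and an integer u with 0 ≤ u ≤ s − 1, such that N = deg h − u. -/
open Polynomial

/-!
With `y = q ^ (1 / x)`, the quantity `τ(f) q^(-deg f / x)` is the product over the monic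
irreducible `P` of `(e + 1) / (y ^ deg P) ^ e`, `e` the multiplicity of `P` in `f`. So `h` is
`x`-SSHC as soon as every multiplicity of `h` maximises `j ↦ (j + 1) / t ^ j` for `t = y ^ deg P`;
the maximisers are the `e` with `e ≤ 1 / (t - 1) ≤ e + 1`. At a critical value
`y = (1 + 1 / r) ^ (1 / s)`, i.e. `x = s log q / log (1 + 1 / r)`, the primes of degree `s` have the
two optimal multiplicities `r - 1` and `r`. Take `y` the largest critical value at which the
largest optimal multiplicities give degree at least `N`; there the smallest ones give degree
below `N`. Raising multiplicities one prime at a time from the smallest to the largest optimal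
ones passes `N`, and the last prime raised, of degree `s`, has a tie `y ^ s = 1 + 1 / r`.
-/

open UniqueFactorizationMonoid

section Divisors

variable {K : Type} [Field K] [DecidableEq K]

theorem prod_normalizedFactors_of_monic {f : K[X]} (hf : f.Monic) :
    (normalizedFactors f).prod = f := by
  simpa [hf.leadingCoeff] using leadingCoeff_mul_prod_normalizedFactors f

theorem normalizedFactors_multiset_prod {m : Multiset K[X]}
    (hm : ∀ P ∈ m, P.Monic ∧ Irreducible P) : normalizedFactors m.prod = m := by
  rw [normalizedFactors_prod_eq m fun P hP => (hm P hP).2]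
  exact (Multiset.map_congr rfl fun P hP => (hm P hP).1.normalize_eq_self).trans m.map_id

theorem monic_irreducible_of_mem_normalizedFactors {f P : K[X]} (hP : P ∈ normalizedFactors f) :
    P.Monic ∧ Irreducible P := by
  have hf : f ≠ 0 := by rintro rfl; simp at hP
  obtain ⟨hirr, hmon, -⟩ := (Polynomial.mem_normalizedFactors_iff hf).1 hP
  exact ⟨hmon, hirr⟩

theorem tau_eq_card_Iic {f : K[X]} (hf : f.Monic) :
    tau f = (Finset.Iic (normalizedFactors f)).card := by
  have hfactors : ∀ {m}, m ≤ normalizedFactors f → ∀ P ∈ m, P.Monic ∧ Irreducible P :=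
    fun hm P hP => monic_irreducible_of_mem_normalizedFactors (Multiset.mem_of_le hm hP)
  have hdiv : {d : K[X] | d.Monic ∧ d ∣ f} =
      Multiset.prod '' ↑(Finset.Iic (normalizedFactors f)) := by
    ext d
    simp only [Set.mem_image, Finset.coe_Iic, Set.mem_Iic]
    constructor
    · rintro ⟨hd, hdf⟩
      exact ⟨normalizedFactors d,
        (dvd_iff_normalizedFactors_le_normalizedFactors hd.ne_zero hf.ne_zero).1 hdf,
        prod_normalizedFactors_of_monic hd⟩
    · rintro ⟨m, hm, rfl⟩
      refine ⟨by simpa using monic_multiset_prod_of_monic m id fun P hP => (hfactors hm P hP).1,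
        ?_⟩
      exact (Multiset.prod_dvd_prod_of_le hm).trans (prod_normalizedFactors_of_monic hf).dvd
  rw [tau, hdiv, Set.InjOn.ncard_image, Set.ncard_coe_finset]
  intro m hm m' hm' hmm'
  simp only [Finset.coe_Iic, Set.mem_Iic] at hm hm'
  rw [← normalizedFactors_multiset_prod (hfactors hm), hmm',
    normalizedFactors_multiset_prod (hfactors hm')]

theorem tau_eq_prod_count {f : K[X]} (hf : f.Monic) {U : Finset K[X]}
    (hU : (normalizedFactors f).toFinset ⊆ U) :
    tau f = ∏ P ∈ U, ((normalizedFactors f).count P + 1) := by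
  rw [tau_eq_card_Iic hf, Multiset.card_Iic]
  refine Finset.prod_subset hU fun P _ hP => ?_
  rw [Multiset.count_eq_zero.2 fun h => hP (Multiset.mem_toFinset.2 h), zero_add]

theorem natDegree_eq_sum_count {f : K[X]} (hf : f.Monic) {U : Finset K[X]}
    (hU : (normalizedFactors f).toFinset ⊆ U) :
    f.natDegree = ∑ P ∈ U, (normalizedFactors f).count P * P.natDegree := by
  conv_lhs => rw [← prod_normalizedFactors_of_monic hf]
  rw [natDegree_multiset_prod_of_monic _ fun P hP =>
    (monic_irreducible_of_mem_normalizedFactors hP).1, Finset.sum_multiset_map_count]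
  refine Finset.sum_subset hU fun P _ hP => ?_
  rw [Multiset.count_eq_zero.2 fun h => hP (Multiset.mem_toFinset.2 h), zero_smul]

end Divisors

section Exponents

variable {t : ℝ}

theorem add_one_mul_pow_add_le (ht : 1 ≤ t) (j : ℕ) :
    ∀ k : ℕ, ((j + k : ℕ) : ℝ) * (t - 1) ≤ 1 →
      ((j : ℝ) + 1) * t ^ (j + k) ≤ ((j + k : ℕ) + 1) * t ^ j
  | 0, _ => le_rfl
  | k + 1, hk => by
    have ih := add_one_mul_pow_add_le ht j k
      (le_trans (by gcongr; linarith) hk)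
    have hstep : ((j + k : ℕ) + 1) * t ≤ ((j + k : ℕ) + 1) + 1 := by push_cast at hk ⊢; linarith
    calc ((j : ℝ) + 1) * t ^ (j + (k + 1)) = ((j : ℝ) + 1) * t ^ (j + k) * t := by ring
      _ ≤ ((j + k : ℕ) + 1) * t ^ j * t := by gcongr
      _ = ((j + k : ℕ) + 1) * t * t ^ j := by ring
      _ ≤ (((j + k : ℕ) + 1) + 1) * t ^ j := by gcongr
      _ = ((j + (k + 1) : ℕ) + 1) * t ^ j := by push_cast; ring

theorem add_mul_pow_le_mul_pow_add (ht : 1 ≤ t) (e : ℕ) (he : 1 ≤ ((e : ℝ) + 1) * (t - 1)) :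
    ∀ k : ℕ, ((e + k : ℕ) + 1 : ℝ) * t ^ e ≤ ((e : ℝ) + 1) * t ^ (e + k)
  | 0 => le_rfl
  | k + 1 => by
    have ih := add_mul_pow_le_mul_pow_add ht e he k
    have hstep : ((e + k : ℕ) + 1 : ℝ) + 1 ≤ ((e + k : ℕ) + 1) * t := by
      have : ((e : ℝ) + 1) * (t - 1) ≤ ((e + k : ℕ) + 1) * (t - 1) := by
        gcongr; linarith
      linarith
    calc ((e + (k + 1) : ℕ) + 1 : ℝ) * t ^ e = (((e + k : ℕ) + 1 : ℝ) + 1) * t ^ e := by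
          push_cast; ring
      _ ≤ ((e + k : ℕ) + 1) * t * t ^ e := by gcongr
      _ = ((e + k : ℕ) + 1 : ℝ) * t ^ e * t := by ring
      _ ≤ ((e : ℝ) + 1) * t ^ (e + k) * t := by gcongr
      _ = ((e : ℝ) + 1) * t ^ (e + (k + 1)) := by ring

end Exponents

/-- `e` maximises `j ↦ (j + 1) / t ^ j` over `ℕ`; see `IsOptimalExponent.mul_pow_le`. -/
def IsOptimalExponent (t : ℝ) (e : ℕ) : Prop :=
  (e : ℝ) * (t - 1) ≤ 1 ∧ 1 ≤ ((e : ℝ) + 1) * (t - 1)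

namespace IsOptimalExponent

variable {t : ℝ} {e : ℕ}

theorem one_lt (h : IsOptimalExponent t e) : 1 < t := by
  by_contra! ht
  nlinarith [h.2, (Nat.cast_nonneg e : (0 : ℝ) ≤ e)]

theorem mul_pow_le (h : IsOptimalExponent t e) (j : ℕ) :
    ((j : ℝ) + 1) * t ^ e ≤ ((e : ℝ) + 1) * t ^ j := by
  have ht := h.one_lt.le
  rcases le_total j e with hje | hej
  · obtain ⟨k, rfl⟩ := Nat.exists_eq_add_of_le hje
    exact add_one_mul_pow_add_le ht j k h.1
  · obtain ⟨k, rfl⟩ := Nat.exists_eq_add_of_le hej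
    exact add_mul_pow_le_mul_pow_add ht e h.2 k

end IsOptimalExponent

noncomputable def maxOptimalExponent (t : ℝ) : ℕ := ⌊(t - 1)⁻¹⌋₊

noncomputable def minOptimalExponent (t : ℝ) : ℕ := ⌈(t - 1)⁻¹⌉₊ - 1

section OptimalExponentBounds

variable {t : ℝ} {e : ℕ}

theorem le_maxOptimalExponent_iff (ht : 1 < t) :
    e ≤ maxOptimalExponent t ↔ (e : ℝ) * (t - 1) ≤ 1 := by
  rw [maxOptimalExponent, Nat.le_floor_iff (by simpa using ht.le), ← one_div,
    le_div_iff₀ (by linarith)]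

theorem le_minOptimalExponent_iff (ht : 1 < t) :
    e ≤ minOptimalExponent t ↔ (e : ℝ) * (t - 1) < 1 := by
  have hceil : 0 < ⌈(t - 1)⁻¹⌉₊ := Nat.ceil_pos.2 (by simpa using ht)
  rw [minOptimalExponent, Nat.le_sub_one_iff_lt hceil, Nat.lt_ceil, ← one_div,
    lt_div_iff₀ (by linarith)]

theorem minOptimalExponent_le_iff (ht : 1 < t) :
    minOptimalExponent t ≤ e ↔ 1 ≤ ((e : ℝ) + 1) * (t - 1) := by
  rw [minOptimalExponent, Nat.sub_le_iff_le_add, Nat.ceil_le, ← one_div,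
    div_le_iff₀ (by linarith)]
  push_cast
  ring_nf

theorem minOptimalExponent_le_maxOptimalExponent (t : ℝ) :
    minOptimalExponent t ≤ maxOptimalExponent t :=
  Nat.sub_le_iff_le_add.2 (Nat.ceil_le_floor_add_one _)

theorem isOptimalExponent_iff (ht : 1 < t) :
    IsOptimalExponent t e ↔ minOptimalExponent t ≤ e ∧ e ≤ maxOptimalExponent t := by
  rw [minOptimalExponent_le_iff ht, le_maxOptimalExponent_iff ht, IsOptimalExponent, and_comm]

theorem isOptimalExponent_zero_iff : IsOptimalExponent t 0 ↔ 2 ≤ t := by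
  simp only [IsOptimalExponent, Nat.cast_zero, zero_mul, zero_le_one, zero_add, one_mul,
    true_and]
  constructor <;> intro h <;> linarith

theorem mul_sub_one_eq_one_of_minOptimalExponent_lt (ht : 1 < t)
    (hmin : minOptimalExponent t < e) (hmax : e ≤ maxOptimalExponent t) :
    (e : ℝ) * (t - 1) = 1 :=
  le_antisymm ((le_maxOptimalExponent_iff ht).1 hmax)
    (not_lt.1 fun h => hmin.not_ge ((le_minOptimalExponent_iff ht).2 h))

theorem maxOptimalExponent_le {N : ℕ} (hN : 0 < N) (ht : 1 + 1 / (N : ℝ) ≤ t) :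
    maxOptimalExponent t ≤ N := by
  have hN' : (0 : ℝ) < N := Nat.cast_pos.2 hN
  have ht' : 1 < t := lt_of_lt_of_le (by simp [hN']) ht
  by_contra! h
  have := (le_maxOptimalExponent_iff ht').1 h
  have hgt : 1 < ((N + 1 : ℕ) : ℝ) * (t - 1) := by
    calc (1 : ℝ) < ((N : ℝ) + 1) * (1 / N) := by field_simp; linarith
      _ ≤ ((N + 1 : ℕ) : ℝ) * (t - 1) := by push_cast; gcongr; linarith
  linarith

theorem maxOptimalExponent_one_add_inv (N : ℕ) : maxOptimalExponent (1 + 1 / (N : ℝ)) = N := by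
  simp [maxOptimalExponent]

end OptimalExponentBounds

section Optimality

variable {K : Type} [Field K] [DecidableEq K]

theorem tau_mul_pow_natDegree_le {y : ℝ} {f h : K[X]} (hf : f.Monic) (hh : h.Monic)
    (hopt : ∀ P : K[X], P.Monic → Irreducible P →
      IsOptimalExponent (y ^ P.natDegree) ((normalizedFactors h).count P)) :
    (tau f : ℝ) * y ^ h.natDegree ≤ tau h * y ^ f.natDegree := by
  set U := (normalizedFactors f).toFinset ∪ (normalizedFactors h).toFinset
  have hfU : (normalizedFactors f).toFinset ⊆ U := Finset.subset_union_left
  have hhU : (normalizedFactors h).toFinset ⊆ U := Finset.subset_union_right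
  rw [tau_eq_prod_count hf hfU, tau_eq_prod_count hh hhU, natDegree_eq_sum_count hf hfU,
    natDegree_eq_sum_count hh hhU, ← Finset.prod_pow_eq_pow_sum, ← Finset.prod_pow_eq_pow_sum]
  push_cast
  rw [← Finset.prod_mul_distrib, ← Finset.prod_mul_distrib]
  refine Finset.prod_le_prod (fun P hP => ?_) fun P hP => ?_
  all_goals
    rw [mul_comm (Multiset.count P (normalizedFactors h)), pow_mul]
    obtain ⟨hmon, hirr⟩ : P.Monic ∧ Irreducible P := by
      rcases Finset.mem_union.1 hP with hP | hP <;>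
        exact monic_irreducible_of_mem_normalizedFactors (Multiset.mem_toFinset.1 hP)
    have hopt := hopt P hmon hirr
  · have hpos : 0 ≤ y ^ P.natDegree := zero_le_one.trans hopt.one_lt.le
    exact mul_nonneg (by positivity) (pow_nonneg hpos _)
  · rw [mul_comm (Multiset.count P (normalizedFactors f)), pow_mul]
    exact hopt.mul_pow_le _

theorem isSSHC_of_isOptimalExponent [Fintype K] {x : ℝ} {h : K[X]} (hh : h.Monic)
    (hopt : ∀ P : K[X], P.Monic → Irreducible P →
      IsOptimalExponent (((Fintype.card K : ℝ) ^ (1 / x)) ^ P.natDegree)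
        ((normalizedFactors h).count P)) :
    IsSSHC x h := by
  refine ⟨hh, fun f hf => ?_⟩
  have hq : (0 : ℝ) ≤ Fintype.card K := Nat.cast_nonneg _
  have hy : 0 < (Fintype.card K : ℝ) ^ (1 / x) :=
    Real.rpow_pos_of_pos (Nat.cast_pos.2 Fintype.card_pos) _
  have hpow (n : ℕ) : (Fintype.card K : ℝ) ^ (-(n : ℝ) / x) =
      (((Fintype.card K : ℝ) ^ (1 / x)) ^ n)⁻¹ := by
    rw [div_eq_mul_one_div, mul_comm, Real.rpow_mul hq, Real.rpow_neg hy.le, Real.rpow_natCast]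
  rw [hpow, hpow, ← div_eq_mul_inv, ← div_eq_mul_inv, div_le_div_iff₀ (pow_pos hy _) (pow_pos hy _)]
  exact tau_mul_pow_natDegree_le hf hh hopt

end Optimality

/-- `critical s r = q ^ (1 / x)` for `x = s log q / log (1 + 1 / r)`. -/
noncomputable def critical (s r : ℕ) : ℝ := (1 + 1 / (r : ℝ)) ^ ((s : ℝ)⁻¹)

section Critical

variable {y : ℝ} {d e : ℕ}

theorem le_maxOptimalExponent_pow_iff (hy : 1 < y) (hd : 0 < d) (he : 0 < e) :
    e ≤ maxOptimalExponent (y ^ d) ↔ y ≤ critical d e := by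
  rw [le_maxOptimalExponent_iff (one_lt_pow₀ hy hd.ne'), critical,
    Real.le_rpow_inv_iff_of_pos (by linarith) (by positivity) (Nat.cast_pos.2 hd),
    Real.rpow_natCast, ← sub_le_iff_le_add', le_div_iff₀ (Nat.cast_pos.2 he), mul_comm]

theorem le_minOptimalExponent_pow_iff (hy : 1 < y) (hd : 0 < d) (he : 0 < e) :
    e ≤ minOptimalExponent (y ^ d) ↔ y < critical d e := by
  rw [le_minOptimalExponent_iff (one_lt_pow₀ hy hd.ne'), critical,
    Real.lt_rpow_inv_iff_of_pos (by linarith) (by positivity) (Nat.cast_pos.2 hd),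
    Real.rpow_natCast, ← sub_lt_iff_lt_add', lt_div_iff₀ (Nat.cast_pos.2 he), mul_comm]

end Critical

section Search

variable {α : Type*} {S : Finset α} {d : α → ℕ} {N : ℕ}

theorem exists_critical_gt (hd : ∀ a ∈ S, 0 < d a) (hN : 0 < N) {y : ℝ}
    (hy : 1 + 1 / (N : ℝ) ≤ y) (hS : ∃ a ∈ S, 0 < minOptimalExponent (y ^ d a)) :
    ∃ b ∈ S, ∃ e ≤ N, y < critical (d b) e ∧
      ∀ a ∈ S, minOptimalExponent (y ^ d a) ≤ maxOptimalExponent (critical (d b) e ^ d a) := by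
  have hy1 : 1 < y := lt_of_lt_of_le (lt_add_of_pos_right _ (by positivity)) hy
  obtain ⟨b, hb, hmin⟩ := (S.filter fun a => 0 < minOptimalExponent (y ^ d a)).exists_min_image
    (fun a => critical (d a) (minOptimalExponent (y ^ d a)))
    (by simpa [Finset.Nonempty] using hS)
  rw [Finset.mem_filter] at hb
  have hlt : y < critical (d b) (minOptimalExponent (y ^ d b)) :=
    (le_minOptimalExponent_pow_iff hy1 (hd b hb.1) hb.2).1 le_rfl
  refine ⟨b, hb.1, _, ?_, hlt, fun a ha => ?_⟩
  · exact (minOptimalExponent_le_maxOptimalExponent _).trans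
      (maxOptimalExponent_le hN (hy.trans (le_self_pow₀ hy1.le (hd b hb.1).ne')))
  · rcases Nat.eq_zero_or_pos (minOptimalExponent (y ^ d a)) with h0 | hpos
    · simp [h0]
    · exact (le_maxOptimalExponent_pow_iff (hy1.trans hlt) (hd a ha) hpos).2
        (hmin a (Finset.mem_filter.2 ⟨ha, hpos⟩))

/-- Take `y` the largest critical value at which the largest optimal exponents reach total
weight `N`: the smallest optimal exponents at `y` are dominated by the largest ones at the next
critical value above it. -/
theorem exists_sum_minOptimalExponent_lt_le_sum_maxOptimalExponent (hd : ∀ a ∈ S, 0 < d a)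
    (hN : 0 < N) {a₁ : α} (ha₁ : a₁ ∈ S) (hd₁ : d a₁ = 1) :
    ∃ y : ℝ, 1 + 1 / (N : ℝ) ≤ y ∧ ∑ a ∈ S, minOptimalExponent (y ^ d a) * d a < N ∧
      N ≤ ∑ a ∈ S, maxOptimalExponent (y ^ d a) * d a := by
  set T := ((S ×ˢ Finset.range (N + 1)).image fun p => critical (d p.1) p.2).filter
    fun z => N ≤ ∑ a ∈ S, maxOptimalExponent (z ^ d a) * d a
  have h₁T : 1 + 1 / (N : ℝ) ∈ T := by
    refine Finset.mem_filter.2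
      ⟨Finset.mem_image.2 ⟨(a₁, N), by simp [ha₁], by simp [hd₁, critical]⟩, ?_⟩
    calc N = maxOptimalExponent ((1 + 1 / (N : ℝ)) ^ d a₁) * d a₁ := by
          rw [hd₁, pow_one, mul_one, maxOptimalExponent_one_add_inv]
      _ ≤ _ := Finset.single_le_sum
          (f := fun a => maxOptimalExponent ((1 + 1 / (N : ℝ)) ^ d a) * d a)
          (fun _ _ => Nat.zero_le _) ha₁
  obtain ⟨y, hyT, hmax⟩ := T.exists_max_image id ⟨_, h₁T⟩
  have hyN : 1 + 1 / (N : ℝ) ≤ y := hmax _ h₁T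
  refine ⟨y, hyN, ?_, (Finset.mem_filter.1 hyT).2⟩
  by_contra! hle
  have hS : ∃ a ∈ S, 0 < minOptimalExponent (y ^ d a) := by
    by_contra! h0
    have : ∑ a ∈ S, minOptimalExponent (y ^ d a) * d a = 0 :=
      Finset.sum_eq_zero fun a ha => by rw [Nat.le_zero.1 (h0 a ha), zero_mul]
    omega
  obtain ⟨b, hb, e, he, hlt, hdom⟩ := exists_critical_gt hd hN hyN hS
  have hT : critical (d b) e ∈ T := Finset.mem_filter.2
    ⟨Finset.mem_image.2 ⟨(b, e), by simp [hb]; omega, rfl⟩,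
      hle.trans (Finset.sum_le_sum fun a ha => Nat.mul_le_mul_right _ (hdom a ha))⟩
  exact (hmax _ hT).not_gt hlt

end Search

theorem exists_le_sum_lt_add {α : Type*} (S : Finset α) (w lo hi : α → ℕ)
    (hw : ∀ a ∈ S, 0 < w a) (hlohi : ∀ a ∈ S, lo a ≤ hi a) {N : ℕ}
    (hlo : ∑ a ∈ S, lo a * w a < N) (hhi : N ≤ ∑ a ∈ S, hi a * w a) :
    ∃ E : α → ℕ, (∀ a ∈ S, lo a ≤ E a ∧ E a ≤ hi a) ∧ N ≤ ∑ a ∈ S, E a * w a ∧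
      ∃ a ∈ S, lo a < E a ∧ ∑ b ∈ S, E b * w b < N + w a := by
  classical
  obtain ⟨E, ⟨hE, hNE⟩, hmin⟩ := exists_minimalFor_of_wellFoundedLT
    (fun E : α → ℕ => (∀ a ∈ S, lo a ≤ E a ∧ E a ≤ hi a) ∧ N ≤ ∑ a ∈ S, E a * w a)
    (fun E => ∑ a ∈ S, E a * w a) ⟨hi, fun a ha => ⟨hlohi a ha, le_rfl⟩, hhi⟩
  obtain ⟨a, ha, hlt⟩ : ∃ a ∈ S, lo a < E a := by
    by_contra! h
    exact (hlo.trans_le hNE).not_ge (Finset.sum_le_sum fun a ha => Nat.mul_le_mul_right _ (h a ha))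
  refine ⟨E, hE, hNE, a, ha, hlt, ?_⟩
  set E' := Function.update E a (E a - 1)
  have hsum : ∑ b ∈ S, E b * w b = ∑ b ∈ S, E' b * w b + w a := by
    have hrest : ∑ b ∈ S.erase a, E' b * w b = ∑ b ∈ S.erase a, E b * w b :=
      Finset.sum_congr rfl fun b hb => by
        simp only [E', Function.update_of_ne (Finset.ne_of_mem_erase hb)]
    obtain ⟨k, hk⟩ : ∃ k, E a = k + 1 := ⟨E a - 1, by omega⟩
    rw [← Finset.add_sum_erase S _ ha, ← Finset.add_sum_erase S (fun b => E' b * w b) ha, hrest]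
    simp only [E', Function.update_self, hk, Nat.add_sub_cancel]
    ring
  by_contra! hge
  have hE' : (∀ b ∈ S, lo b ≤ E' b ∧ E' b ≤ hi b) ∧ N ≤ ∑ b ∈ S, E' b * w b := by
    refine ⟨fun b hb => ?_, by have := hw a ha; omega⟩
    rcases eq_or_ne b a with rfl | hba
    · simp only [E', Function.update_self]; have := hE b hb; omega
    · simpa only [E', Function.update_of_ne hba] using hE b hb
  have hle : ∑ b ∈ S, E b * w b ≤ ∑ b ∈ S, E' b * w b := hmin hE' (by dsimp only; omega)
  have := hw a ha
  omega

theorem Polynomial.finite_setOf_natDegree_le_s18 (R : Type*) [Semiring R] [Finite R] (N : ℕ) :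
    {p : R[X] | p.natDegree ≤ N}.Finite := by
  have : Finite (degreeLT R (N + 1)) := Finite.of_equiv _ (degreeLTEquiv R (N + 1)).toEquiv.symm
  refine (Set.toFinite (degreeLT R (N + 1) : Set R[X])).subset fun p hp => mem_degreeLT.2 ?_
  exact (degree_le_of_natDegree_le hp).trans_lt (by exact_mod_cast N.lt_succ_self)

theorem exists_monic_count_normalizedFactors_eq {K : Type} [Field K] [DecidableEq K]
    {M : Finset K[X]} (hM : ∀ P ∈ M, P.Monic ∧ Irreducible P) (E : K[X] → ℕ) :
    ∃ h : K[X], h.Monic ∧ (∀ P, (normalizedFactors h).count P = if P ∈ M then E P else 0) ∧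
      h.natDegree = ∑ P ∈ M, E P * P.natDegree := by
  set m := ∑ P ∈ M, Multiset.replicate (E P) P
  have hm : ∀ P ∈ m, P.Monic ∧ Irreducible P := fun P hP => by
    obtain ⟨Q, hQ, hPQ⟩ := Multiset.mem_sum.1 hP
    exact Multiset.eq_of_mem_replicate hPQ ▸ hM Q hQ
  have hmon : m.prod.Monic := by
    simpa using monic_multiset_prod_of_monic m id fun P hP => (hm P hP).1
  have hcount (P : K[X]) : (normalizedFactors m.prod).count P = if P ∈ M then E P else 0 := by
    rw [normalizedFactors_multiset_prod hm, Multiset.count_sum']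
    simp [Multiset.count_replicate]
  refine ⟨m.prod, hmon, hcount, ?_⟩
  refine (natDegree_eq_sum_count hmon fun P hP => ?_).trans
    (Finset.sum_congr rfl fun P hP => by rw [hcount, if_pos hP])
  by_contra hPM
  have := Multiset.count_pos.2 (Multiset.mem_toFinset.1 hP)
  rw [hcount, if_neg hPM] at this
  exact this.false

theorem two_le_pow_of_lt {N d : ℕ} (hN : 0 < N) {y : ℝ} (hy : 1 + 1 / (N : ℝ) ≤ y)
    (hd : N < d) : 2 ≤ y ^ d := by
  have hN' : (0 : ℝ) < N := Nat.cast_pos.2 hN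
  calc (2 : ℝ) ≤ 1 + d * (1 / N) := by
        have : (1 : ℝ) ≤ d / N := by rw [le_div_iff₀ hN', one_mul]; exact_mod_cast hd.le
        rw [mul_one_div]
        linarith
    _ ≤ (1 + 1 / N) ^ d := one_add_mul_le_pow (by linarith [one_div_pos.2 hN']) d
    _ ≤ y ^ d := by gcongr

theorem Real.rpow_one_div_eq_of_pow_eq {q y c : ℝ} (hq : 0 < q) (hq1 : q ≠ 1) (hy : 0 < y)
    {s : ℕ} (hs : s ≠ 0) (hc : y ^ s = c) : q ^ (1 / (s * Real.log q / Real.log c)) = y := by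
  have hlogq : Real.log q ≠ 0 := Real.log_ne_zero_of_pos_of_ne_one hq hq1
  rw [← hc, Real.log_pow, one_div_div, mul_div_mul_left _ _ (Nat.cast_ne_zero.2 hs),
    Real.rpow_def_of_pos hq, mul_div_cancel₀ _ hlogq, Real.exp_log hy]

theorem exists_optimal_monic_natDegree_mem_Ico {Fq : Type} [Field Fq] [Fintype Fq]
    [DecidableEq Fq] {N : ℕ} (hN : 0 < N) :
    ∃ y : ℝ, 0 < y ∧ ∃ s r : ℕ, 0 < s ∧ 0 < r ∧ y ^ s = 1 + 1 / (r : ℝ) ∧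
      ∃ h : Fq[X], h.Monic ∧
        (∀ P : Fq[X], P.Monic → Irreducible P →
          IsOptimalExponent (y ^ P.natDegree) ((normalizedFactors h).count P)) ∧
        h.natDegree ∈ Set.Ico N (N + s) := by
  obtain ⟨M, hM⟩ : ∃ M : Finset Fq[X], ∀ P, P ∈ M ↔ P.Monic ∧ Irreducible P ∧ P.natDegree ≤ N :=
    ⟨((finite_setOf_natDegree_le_s18 Fq N).subset fun P hP => hP.2.2).toFinset,
      fun P => Set.Finite.mem_toFinset _⟩
  have hMirr (P) (hP : P ∈ M) : P.Monic ∧ Irreducible P := ⟨((hM P).1 hP).1, ((hM P).1 hP).2.1⟩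
  have hdeg (P) (hP : P ∈ M) : 0 < P.natDegree := (hMirr P hP).2.natDegree_pos
  obtain ⟨y, hyN, hlo, hhi⟩ := exists_sum_minOptimalExponent_lt_le_sum_maxOptimalExponent hdeg hN
    ((hM X).2 ⟨monic_X, irreducible_X, by rw [natDegree_X]; omega⟩) natDegree_X
  have hy1 : 1 < y := lt_of_lt_of_le (lt_add_of_pos_right _ (by positivity)) hyN
  obtain ⟨E, hE, hNE, a, haM, hlt, hlt'⟩ := exists_le_sum_lt_add M natDegree
    (fun P => minOptimalExponent (y ^ P.natDegree)) (fun P => maxOptimalExponent (y ^ P.natDegree))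
    hdeg (fun P _ => minOptimalExponent_le_maxOptimalExponent _) hlo hhi
  obtain ⟨h, hmon, hcount, hdegh⟩ := exists_monic_count_normalizedFactors_eq hMirr E
  have htie := mul_sub_one_eq_one_of_minOptimalExponent_lt (one_lt_pow₀ hy1 (hdeg a haM).ne')
    hlt (hE a haM).2
  have hr : 0 < E a := by omega
  refine ⟨y, by linarith, a.natDegree, E a, hdeg a haM, hr, ?_, h, hmon, fun P hPm hPi => ?_,
    hdegh ▸ ⟨hNE, hlt'⟩⟩
  · field_simp
    linarith
  · rw [hcount]
    split_ifs with hPM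
    · exact (isOptimalExponent_iff (one_lt_pow₀ hy1 (hdeg P hPM).ne')).2 (hE P hPM)
    · refine isOptimalExponent_zero_iff.2 (two_le_pow_of_lt hN hyN ?_)
      by_contra! hPN
      exact hPM ((hM P).2 ⟨hPm, hPi, hPN⟩)

/-- Every positive integer `N` can be written as `deg h - u` where `h` is an `x`-SSHC
polynomial for some `x = s log q / log(1 + 1/r) ∈ S` and `0 ≤ u ≤ s - 1`. -/
theorem every_degree_reachable {Fq : Type} [Field Fq] [Fintype Fq] (N : ℕ) (hN : 0 < N) :
    ∃ s r : ℕ, 0 < s ∧ 0 < r ∧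
      ∃ h : Fq[X],
        IsSSHC ((s : ℝ) * Real.log (Fintype.card Fq) / Real.log (1 + 1 / (r : ℝ))) h ∧
        ∃ u : ℕ, u ≤ s - 1 ∧ N + u = h.natDegree := by
  classical
  obtain ⟨y, hy, s, r, hs, hr, hys, h, hmon, hopt, hNh, hhN⟩ :=
    exists_optimal_monic_natDegree_mem_Ico (Fq := Fq) hN
  have hq : (Fintype.card Fq : ℝ) ^
      (1 / ((s : ℝ) * Real.log (Fintype.card Fq) / Real.log (1 + 1 / (r : ℝ)))) = y :=
    Real.rpow_one_div_eq_of_pow_eq (Nat.cast_pos.2 Fintype.card_pos)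
      (Nat.cast_ne_one.2 Fintype.one_lt_card.ne') hy hs.ne' hys
  refine ⟨s, r, hs, hr, h, isSSHC_of_isOptimalExponent hmon (by rwa [hq]), h.natDegree - N,
    by omega, by omega⟩
end
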